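/- arXiv:2408.00542 — 6 statements merged into one kernel-verified Lean document; each statement's English description precedes it below -/
import Mathlib

section
/- Let F be a field, let C ⊆ F^n be a linear subspace (a linear code of length n), and let T be a natural number. Suppose that every nonzero vector v in the dual code C^⊥ = {v ∈ F^n : ∑_{i} v_i c_i = 0 for all c ∈ C} has Hamming weight strictly greater than T. Then for every subset 𝒯 ⊆ {1,…,n} with |𝒯| = T, the coordinate projection of C onto the coordinates in 𝒯 is all of F^𝒯; that is, for every w : 𝒯 → F there exists c ∈ C with c_i = w_i for all i ∈ 𝒯. -/
/-!
Project `C` and all vectors vanishing on `𝒯` together: they span `F^n` unless some nonzero `u` is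
orthogonal to both. Orthogonality to the second makes `u` supported on `𝒯`, so `u` would be a
nonzero dual codeword of weight at most `|𝒯| = T`. Hence every `w` splits as `c + z` with `c ∈ C`
and `z` vanishing on `𝒯`, i.e. `c` agrees with `w` on `𝒯`.
-/

open Matrix

section

variable {F ι : Type*} [Field F] [Fintype ι]

theorem Submodule.eq_top_of_forall_dotProduct_eq_zero {W : Submodule F (ι → F)}
    (h : ∀ u : ι → F, (∀ w ∈ W, u ⬝ᵥ w = 0) → u = 0) : W = ⊤ := by
  classical
  rw [← dualAnnihilator_eq_bot_iff, eq_bot_iff]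
  intro f hf
  have hu : (dotProductEquiv F ι).symm f = 0 := h _ fun w hw => by
    have hfw := (mem_dualAnnihilator f).1 hf w hw
    rwa [← (dotProductEquiv F ι).apply_symm_apply f, dotProductEquiv_apply_apply] at hfw
  simpa using congrArg (dotProductEquiv F ι) hu

theorem apply_eq_zero_of_forall_dotProduct_pi_bot_eq_zero {s : Set ι} {u : ι → F}
    (hu : ∀ z ∈ Submodule.pi s (fun _ => (⊥ : Submodule F F)), u ⬝ᵥ z = 0) {i : ι}
    (hi : i ∉ s) : u i = 0 := by
  classical
  have hz : Pi.single i (1 : F) ∈ Submodule.pi s (fun _ => (⊥ : Submodule F F)) := fun j hj =>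
    (Submodule.mem_bot F).2 (Pi.single_eq_of_ne (ne_of_mem_of_not_mem hj hi) 1)
  simpa using hu _ hz

theorem hammingNorm_le_card_of_forall_notMem_eq_zero {β : ι → Type*} [∀ i, DecidableEq (β i)]
    [∀ i, Zero (β i)] {x : ∀ i, β i} {s : Finset ι} (hx : ∀ i ∉ s, x i = 0) :
    hammingNorm x ≤ s.card :=
  Finset.card_le_card fun i hi => by
    by_contra his
    exact (Finset.mem_filter.1 hi).2 (hx i his)

theorem Submodule.exists_mem_eqOn_of_dual (C : Submodule F (ι → F)) (s : Finset ι)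
    (h : ∀ u : ι → F, (∀ c ∈ C, u ⬝ᵥ c = 0) → (∀ i ∉ s, u i = 0) → u = 0) (w : ι → F) :
    ∃ c ∈ C, ∀ i ∈ s, c i = w i := by
  have hspan : C ⊔ Submodule.pi (s : Set ι) (fun _ => (⊥ : Submodule F F)) = ⊤ :=
    eq_top_of_forall_dotProduct_eq_zero fun u hu =>
      h u (fun c hc => hu c (mem_sup_left hc)) fun i hi =>
        apply_eq_zero_of_forall_dotProduct_pi_bot_eq_zero
          (fun z hz => hu z (mem_sup_right hz)) (by simpa using hi)
  obtain ⟨c, hc, z, hz, rfl⟩ := mem_sup.1 (hspan ▸ mem_top : w ∈ C ⊔ _)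
  refine ⟨c, hc, fun i hi => ?_⟩
  have hzi : z i = 0 := by simpa using hz i hi
  simp [hzi]

end

/-- If every nonzero vector of the dual code of `C ⊆ F^n` has Hamming weight `> T`, then
the projection of `C` onto any `T` coordinates is surjective. -/
theorem proj_surjective_of_dual_dist {F : Type*} [Field F] [DecidableEq F] {n : ℕ}
    (C : Submodule F (Fin n → F)) (T : ℕ)
    (hdual : ∀ v : Fin n → F, (∀ c ∈ C, ∑ i, v i * c i = 0) → v ≠ 0 → T < hammingNorm v)
    (𝒯 : Finset (Fin n)) (h𝒯 : 𝒯.card = T) (w : Fin n → F) :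
    ∃ c ∈ C, ∀ i ∈ 𝒯, c i = w i := by
  refine C.exists_mem_eqOn_of_dual 𝒯 (fun u hu hsupp => ?_) w
  by_contra hne
  have hlt : T < hammingNorm u := hdual u hu hne
  have hle : hammingNorm u ≤ T := h𝒯 ▸ hammingNorm_le_card_of_forall_notMem_eq_zero hsupp
  omega
end

section
/- (General cross-subspace alignment noise containment.) Let F be a field and let X ≥ 1, T ≥ 1, L ≥ 1 and Δ ≥ 1 be natural numbers. Let h ∈ F[x] have degree L, and for each ℓ ∈ {1,…,L} let h_ℓ, k_ℓ ∈ F[x] satisfy h = h_ℓ·k_ℓ with deg(k_ℓ) ≤ Δ. Let f_ℓ, g_ℓ ∈ F be scalars, let a_ℓ ∈ F[x] have degree < X, and let b_ℓ ∈ F[x] have degree < T. Define the shares f̂_ℓ = f_ℓ + k_ℓ·a_ℓ and ĝ_ℓ = g_ℓ·h_ℓ + h·b_ℓ. Then ∑_{ℓ=1}^{L} f̂_ℓ·ĝ_ℓ − ∑_{ℓ=1}^{L} f_ℓ·g_ℓ·h_ℓ lies in h·F[x]^{<X+T−1+Δ}; that is, there exists c ∈ F[x] of degree < X + T − 1 +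 Δ with ∑_ℓ f̂_ℓ ĝ_ℓ = ∑_ℓ f_ℓ g_ℓ h_ℓ + h·c. -/
/-!
Expanding a product of shares, every term except `f_ℓ g_ℓ h_ℓ` is a multiple of `h`: the cross
term `k_ℓ a_ℓ · g_ℓ h_ℓ` is one because `h_ℓ k_ℓ = h`. The quotient
`c = ∑ (f_ℓ b_ℓ + g_ℓ a_ℓ + k_ℓ a_ℓ b_ℓ)` has degree below `X + T - 1 + Δ`, the largest
contribution being `deg (k_ℓ a_ℓ b_ℓ) ≤ Δ + (X - 1) + (T - 1)`.
-/

open Polynomial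

namespace Polynomial

theorem mul_mem_degreeLT {R : Type*} [Semiring R] {p q : R[X]} {m n : ℕ}
    (hp : p ∈ degreeLT R m) (hq : q ∈ degreeLT R n) : p * q ∈ degreeLT R (m + n - 1) := by
  rcases eq_or_ne p 0 with rfl | hp0
  · simp
  rcases eq_or_ne q 0 with rfl | hq0
  · simp
  rw [mem_degreeLT, ← natDegree_lt_iff_degree_lt hp0] at hp
  rw [mem_degreeLT, ← natDegree_lt_iff_degree_lt hq0] at hq
  rw [mem_degreeLT]
  refine degree_le_natDegree.trans_lt ?_
  exact_mod_cast natDegree_mul_le.trans_lt (by omega)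

theorem C_mul_mem_degreeLT {R : Type*} [Semiring R] (a : R) {p : R[X]} {n : ℕ}
    (hp : p ∈ degreeLT R n) : C a * p ∈ degreeLT R n :=
  C_mul' a p ▸ Submodule.smul_mem _ a hp

theorem share_mul_share_eq {R : Type*} [CommSemiring R] (f g : R) (a b hl kl : R[X]) :
    (C f + kl * a) * (C g * hl + hl * kl * b)
      = C (f * g) * hl + hl * kl * (C f * b + C g * a + kl * (a * b)) := by
  rw [C_mul]
  ring

end Polynomial

theorem csa_noise_containment_general {F : Type*} [Field F] {X T L Δ : ℕ}
    (hΔ : 1 ≤ Δ)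
    (h : F[X])
    (hl kl : Fin L → F[X])
    (hfac : ∀ ℓ, h = hl ℓ * kl ℓ) (hkdeg : ∀ ℓ, (kl ℓ).degree ≤ (Δ : ℕ))
    (f g : Fin L → F) (a b : Fin L → F[X])
    (ha : ∀ ℓ, (a ℓ).degree < (X : ℕ)) (hb : ∀ ℓ, (b ℓ).degree < (T : ℕ)) :
    ∃ c : F[X], c.degree < ((X + T - 1 + Δ : ℕ) : ℕ) ∧
      ∑ ℓ, (C (f ℓ) + kl ℓ * a ℓ) * (C (g ℓ) * hl ℓ + h * b ℓ)
        = ∑ ℓ, C (f ℓ * g ℓ) * hl ℓ + h * c := by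
  refine ⟨∑ ℓ, (C (f ℓ) * b ℓ + C (g ℓ) * a ℓ + kl ℓ * (a ℓ * b ℓ)), mem_degreeLT.mp ?_, ?_⟩
  · refine Submodule.sum_mem _ fun ℓ _ ↦ add_mem (add_mem ?_ ?_) ?_
    · exact degreeLT_mono (by omega) (C_mul_mem_degreeLT _ (mem_degreeLT.mpr (hb ℓ)))
    · exact degreeLT_mono (by omega) (C_mul_mem_degreeLT _ (mem_degreeLT.mpr (ha ℓ)))
    · have hk : kl ℓ ∈ degreeLT F (Δ + 1) := by
        rw [degreeLT_succ_eq_degreeLE, mem_degreeLE]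
        exact hkdeg ℓ
      have hab := mul_mem_degreeLT (mem_degreeLT.mpr (ha ℓ)) (mem_degreeLT.mpr (hb ℓ))
      exact degreeLT_mono (by omega) (mul_mem_degreeLT hk hab)
  · rw [Finset.mul_sum, ← Finset.sum_add_distrib]
    refine Finset.sum_congr rfl fun ℓ _ ↦ ?_
    rw [hfac ℓ]
    exact share_mul_share_eq _ _ _ _ _ _

/-- General cross-subspace alignment noise containment: with shares
`f̂_ℓ = f_ℓ + k_ℓ a_ℓ` and `ĝ_ℓ = g_ℓ h_ℓ + h b_ℓ`, where `h = h_ℓ k_ℓ`, `deg k_ℓ ≤ Δ`,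
`deg a_ℓ < X`, `deg b_ℓ < T`, the sum of products of shares equals
`∑ f_ℓ g_ℓ h_ℓ + h c` with `deg c < X + T - 1 + Δ`. -/
theorem csa_noise_containment {F : Type*} [Field F] {X T L Δ : ℕ}
    (hX : 1 ≤ X) (hT : 1 ≤ T) (hL : 1 ≤ L) (hΔ : 1 ≤ Δ)
    (h : F[X]) (hdeg : h.degree = L)
    (hl kl : Fin L → F[X])
    (hfac : ∀ ℓ, h = hl ℓ * kl ℓ) (hkdeg : ∀ ℓ, (kl ℓ).degree ≤ (Δ : ℕ))
    (f g : Fin L → F) (a b : Fin L → F[X])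
    (ha : ∀ ℓ, (a ℓ).degree < (X : ℕ)) (hb : ∀ ℓ, (b ℓ).degree < (T : ℕ)) :
    ∃ c : F[X], c.degree < ((X + T - 1 + Δ : ℕ) : ℕ) ∧
      ∑ ℓ, (C (f ℓ) + kl ℓ * a ℓ) * (C (g ℓ) * hl ℓ + h * b ℓ)
        = ∑ ℓ, C (f ℓ * g ℓ) * hl ℓ + h * c :=
  csa_noise_containment_general hΔ h hl kl hfac hkdeg f g a b ha hb
end

section
/- (Noise containment for the CSA construction on the projective line.) Let F be a field, X ≥ 1, T ≥ 1, L ≥ 1, and let γ_1, …, γ_L ∈ F be pairwise distinct. Set h = ∏_{ℓ=1}^{L}(x − γ_ℓ) and h_ℓ = ∏_{ℓ' ≠ ℓ}(x − γ_{ℓ'}). Let f_ℓ, g_ℓ ∈ F be scalars, let a_ℓ ∈ F[x] have degree < X and b_ℓ ∈ F[x] have degree < T, and define f̂_ℓ = f_ℓ + (x − γ_ℓ)·a_ℓ and ĝ_ℓ = g_ℓ·h_ℓ + h·b_ℓ. Then there exists a polynomial c ∈ F[x] of degree < X + T such that ∑_{ℓ=1}^{L} f̂_ℓ·ĝ_ℓ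 = ∑_{ℓ=1}^{L} f_ℓ·g_ℓ·h_ℓ + h·c. In particular ∑_ℓ f̂_ℓ ĝ_ℓ has degree < L + X + T. -/
/-!
Write `h = nodal univ γ` and `h_ℓ = nodal (univ.erase ℓ) γ`. Since `h = (x - γ_ℓ) h_ℓ`, each product
expands as `f̂_ℓ ĝ_ℓ = f_ℓ g_ℓ h_ℓ + h (f_ℓ b_ℓ + g_ℓ a_ℓ + (x - γ_ℓ) a_ℓ b_ℓ)`, and the bracket has
degree `< X + T` because `(x - γ_ℓ) a_ℓ` has degree `≤ X`. The `h_ℓ` have degree `L - 1` and `h` is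
monic of degree `L`, which gives the degree bound on the sum.
-/

open Polynomial Finset Lagrange

namespace Polynomial

variable {R : Type*}

theorem degree_mul_lt_of_le_of_lt [Semiring R] {p q : R[X]} {m n : ℕ}
    (hp : p.degree ≤ m) (hq : q.degree < n) : (p * q).degree < ↑(m + n) := by
  rcases eq_or_ne p 0 with rfl | hp0
  · simp
  refine (degree_mul_le p q).trans_lt ?_
  push_cast
  exact WithBot.add_lt_add_of_le_of_lt (degree_ne_bot.2 hp0) hp hq

theorem degree_X_sub_C_mul_le_of_lt [Ring R] {p : R[X]} {n : ℕ} (r : R) (hp : p.degree < n) :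
    ((X - C r) * p).degree ≤ (n : WithBot ℕ) :=
  calc ((X - C r) * p).degree ≤ 1 + p.degree := (degree_mul_le _ _).trans (by
        gcongr; exact degree_X_sub_C_le r)
    _ = p.degree + 1 := add_comm _ _
    _ ≤ n := Nat.WithBot.add_one_le_of_lt hp

end Polynomial

namespace Lagrange

variable {R ι : Type*} [CommRing R]

theorem nodal_erase_mem_degreeLT [Nontrivial R] [DecidableEq ι] {s : Finset ι} (v : ι → R)
    {i : ι} (hi : i ∈ s) : nodal (s.erase i) v ∈ degreeLT R #s := by
  rw [mem_degreeLT, degree_nodal, card_erase_of_mem hi, Nat.cast_lt]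
  exact Nat.sub_lt (card_pos.2 ⟨i, hi⟩) one_pos

theorem sum_C_mul_nodal_erase_mem_degreeLT [Nontrivial R] [DecidableEq ι] (s : Finset ι)
    (v w : ι → R) : ∑ i ∈ s, C (w i) * nodal (s.erase i) v ∈ degreeLT R #s :=
  sum_mem fun i hi => by
    rw [← smul_eq_C_mul]
    exact Submodule.smul_mem _ _ (nodal_erase_mem_degreeLT v hi)

end Lagrange

section CSA

variable {R ι : Type*} [CommRing R]

/-- The polynomial `c` of the CSA noise decomposition `∑ f̂_i ĝ_i = ∑ f_i g_i h_i + h c`. -/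
noncomputable def csaNoise (s : Finset ι) (v f g : ι → R) (a b : ι → R[X]) : R[X] :=
  ∑ i ∈ s, (C (f i) * b i + C (g i) * a i + (X - C (v i)) * (a i * b i))

theorem sum_share_mul_share_eq [DecidableEq ι] (s : Finset ι) (v f g : ι → R)
    (a b : ι → R[X]) :
    ∑ i ∈ s, (C (f i) + (X - C (v i)) * a i) * (C (g i) * nodal (s.erase i) v + nodal s v * b i)
      = ∑ i ∈ s, C (f i * g i) * nodal (s.erase i) v + nodal s v * csaNoise s v f g a b := by
  rw [csaNoise, mul_sum, ← sum_add_distrib]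
  refine sum_congr rfl fun i hi => ?_
  rw [nodal_eq_mul_nodal_erase hi, C_mul]
  ring

theorem csaNoise_mem_degreeLT (s : Finset ι) (v f g : ι → R) {a b : ι → R[X]} {m n : ℕ}
    (ha : ∀ i, (a i).degree < m) (hb : ∀ i, (b i).degree < n) :
    csaNoise s v f g a b ∈ degreeLT R (m + n) := by
  refine sum_mem fun i _ => add_mem (add_mem ?_ ?_) ?_
  · rw [← smul_eq_C_mul]
    exact Submodule.smul_mem _ _ (degreeLT_mono (by omega) (mem_degreeLT.2 (hb i)))
  · rw [← smul_eq_C_mul]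
    exact Submodule.smul_mem _ _ (degreeLT_mono (by omega) (mem_degreeLT.2 (ha i)))
  · rw [mem_degreeLT, ← mul_assoc]
    exact degree_mul_lt_of_le_of_lt (degree_X_sub_C_mul_le_of_lt _ (ha i)) (hb i)

theorem degree_sum_share_mul_share_lt [Nontrivial R] [DecidableEq ι] (s : Finset ι)
    (v f g : ι → R) {a b : ι → R[X]} {m n : ℕ}
    (ha : ∀ i, (a i).degree < m) (hb : ∀ i, (b i).degree < n) :
    (∑ i ∈ s, (C (f i) + (X - C (v i)) * a i) *
      (C (g i) * nodal (s.erase i) v + nodal s v * b i)).degree < ↑(#s + m + n) := by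
  rw [sum_share_mul_share_eq, ← mem_degreeLT]
  have hlow := sum_C_mul_nodal_erase_mem_degreeLT s v (f * g)
  have hhigh : (nodal s v * csaNoise s v f g a b).degree < ↑(#s + m + n) := by
    rw [add_assoc]
    exact degree_mul_lt_of_le_of_lt degree_nodal.le
      (mem_degreeLT.1 (csaNoise_mem_degreeLT s v f g ha hb))
  exact add_mem (degreeLT_mono (by omega) hlow) (mem_degreeLT.2 hhigh)

end CSA

theorem csa_projective_line_noise_containment_general {F : Type*} [Field F] {X T L : ℕ}
    (γ : Fin L → F)
    (f g : Fin L → F) (a b : Fin L → F[X])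
    (ha : ∀ ℓ, (a ℓ).degree < (X : ℕ)) (hb : ∀ ℓ, (b ℓ).degree < (T : ℕ)) :
    (∃ c : F[X], c.degree < ((X + T : ℕ) : WithBot ℕ) ∧
      ∑ ℓ, (C (f ℓ) + (Polynomial.X - C (γ ℓ)) * a ℓ)
          * (C (g ℓ) * (∏ ℓ' ∈ Finset.univ.erase ℓ, (Polynomial.X - C (γ ℓ')))
              + (∏ ℓ', (Polynomial.X - C (γ ℓ'))) * b ℓ)
        = ∑ ℓ, C (f ℓ * g ℓ) * (∏ ℓ' ∈ Finset.univ.erase ℓ, (Polynomial.X - C (γ ℓ')))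
            + (∏ ℓ', (Polynomial.X - C (γ ℓ'))) * c) ∧
    (∑ ℓ, (C (f ℓ) + (Polynomial.X - C (γ ℓ)) * a ℓ)
          * (C (g ℓ) * (∏ ℓ' ∈ Finset.univ.erase ℓ, (Polynomial.X - C (γ ℓ')))
              + (∏ ℓ', (Polynomial.X - C (γ ℓ'))) * b ℓ)).degree
      < ((L + X + T : ℕ) : WithBot ℕ) := by
  have hdeg := degree_sum_share_mul_share_lt univ γ f g ha hb
  rw [card_univ, Fintype.card_fin] at hdeg
  exact ⟨⟨_, mem_degreeLT.1 (csaNoise_mem_degreeLT univ γ f g ha hb),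
    sum_share_mul_share_eq univ γ f g a b⟩, hdeg⟩

/-- Noise containment for the CSA construction on the projective line:
with `h = ∏_ℓ (x - γ_ℓ)`, `h_ℓ = ∏_{ℓ' ≠ ℓ} (x - γ_{ℓ'})`, shares
`f̂_ℓ = f_ℓ + (x - γ_ℓ) a_ℓ` (`deg a_ℓ < X`) and `ĝ_ℓ = g_ℓ h_ℓ + h b_ℓ` (`deg b_ℓ < T`),
there is `c` with `deg c < X + T` and `∑ f̂_ℓ ĝ_ℓ = ∑ f_ℓ g_ℓ h_ℓ + h c`; in particular
`∑ f̂_ℓ ĝ_ℓ` has degree `< L + X + T`. -/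
theorem csa_projective_line_noise_containment {F : Type*} [Field F] {X T L : ℕ}
    (hX : 1 ≤ X) (hT : 1 ≤ T) (hL : 1 ≤ L)
    (γ : Fin L → F) (hγ : Function.Injective γ)
    (f g : Fin L → F) (a b : Fin L → F[X])
    (ha : ∀ ℓ, (a ℓ).degree < (X : ℕ)) (hb : ∀ ℓ, (b ℓ).degree < (T : ℕ)) :
    (∃ c : F[X], c.degree < ((X + T : ℕ) : WithBot ℕ) ∧
      ∑ ℓ, (C (f ℓ) + (Polynomial.X - C (γ ℓ)) * a ℓ)
          * (C (g ℓ) * (∏ ℓ' ∈ Finset.univ.erase ℓ, (Polynomial.X - C (γ ℓ')))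
              + (∏ ℓ', (Polynomial.X - C (γ ℓ'))) * b ℓ)
        = ∑ ℓ, C (f ℓ * g ℓ) * (∏ ℓ' ∈ Finset.univ.erase ℓ, (Polynomial.X - C (γ ℓ')))
            + (∏ ℓ', (Polynomial.X - C (γ ℓ'))) * c) ∧
    (∑ ℓ, (C (f ℓ) + (Polynomial.X - C (γ ℓ)) * a ℓ)
          * (C (g ℓ) * (∏ ℓ' ∈ Finset.univ.erase ℓ, (Polynomial.X - C (γ ℓ')))
              + (∏ ℓ', (Polynomial.X - C (γ ℓ'))) * b ℓ)).degree
      < ((L + X + T : ℕ) : WithBot ℕ) :=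
  csa_projective_line_noise_containment_general γ f g a b ha hb
end

section
/- (Decoding correctness of the CSA scheme over the projective line, Theorem 3.) Let F be a field, X ≥ 1, T ≥ 1, L ≥ 1, N = L + X + T. Let γ_1, …, γ_L ∈ F be pairwise distinct, set h = ∏_{ℓ=1}^{L}(x − γ_ℓ) and h_ℓ = ∏_{ℓ' ≠ ℓ}(x − γ_{ℓ'}), and let α_1, …, α_N ∈ F be pairwise distinct. Suppose f_ℓ, g_ℓ, f'_ℓ, g'_ℓ ∈ F are scalars, a_ℓ, a'_ℓ ∈ F[x] have degree < X, and b_ℓ, b'_ℓ ∈ F[x] have degree < T. Define f̂_ℓ = f_ℓ + (x − γ_ℓ)a_ℓ, ĝ_ℓ = g_ℓ h_ℓ + h b_ℓ, and similarly f̂'_ℓ = f'_ℓ + (x − γ_ℓ)a'_ℓ, ĝ'_ℓ = g'_ℓ h_ℓ + h b'_ℓ. If ∑_{ℓ=1}^{L} f̂_ℓ(α_n)·ĝ_ℓ(α_n) = ∑_{ℓ=1}^{L} f̂'_ℓ(α_n)·ĝ'_ℓ(α_n) for every n ∈ {1,…,N}, then f_ℓ·g_ℓ = f'_ℓ·g'_ℓ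 for every ℓ ∈ {1,…,L}. -/
/-!
Every summand `f̂_ℓ ĝ_ℓ` has degree `< L + X + T`, so the answer polynomial `∑ f̂_ℓ ĝ_ℓ` is
determined by its values at the `N` distinct points `α_n`. At `x = γ_ℓ` the polynomial `h` and all
`h_ℓ'` with `ℓ' ≠ ℓ` vanish, so the answer takes the value `f_ℓ g_ℓ h_ℓ(γ_ℓ)` there, and
`h_ℓ(γ_ℓ) ≠ 0` because the `γ`'s are distinct.
-/

open Polynomial Finset Lagrange

section Degree

variable {R : Type*} [Semiring R]

theorem Polynomial.degree_mul_lt_of_le_of_lt_s9 {p q : R[X]} {m n : ℕ}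
    (hp : p.degree ≤ m) (hq : q.degree < n) : (p * q).degree < ↑(m + n) := by
  rcases eq_or_ne p 0 with rfl | hp0
  · simp
  rw [Nat.cast_add]
  exact (degree_mul_le p q).trans_lt <|
    WithBot.add_lt_add_of_le_of_lt (degree_ne_bot.mpr hp0) hp hq

end Degree

section Answer

variable {R : Type*} [CommRing R] {ι : Type*} [DecidableEq ι]

theorem degree_C_add_X_sub_C_mul_le (c r : R) {a : R[X]} {n : ℕ} (ha : a.degree < n) :
    (C c + (X - C r) * a).degree ≤ (n : WithBot ℕ) := by
  refine (degree_add_le _ _).trans (max_le (degree_C_le.trans Nat.WithBot.coe_nonneg) ?_)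
  calc ((X - C r) * a).degree ≤ 1 + a.degree :=
        (degree_mul_le _ _).trans (add_le_add_left (degree_X_sub_C_le r) _)
    _ ≤ n := by rw [add_comm]; exact Nat.WithBot.add_one_le_of_lt ha

theorem degree_C_mul_nodal_erase_add_nodal_mul_lt [Nontrivial R] {s : Finset ι} {i : ι}
    (hi : i ∈ s) (v : ι → R) (c : R) {b : R[X]} {n : ℕ} (hb : b.degree < n) :
    (C c * nodal (s.erase i) v + nodal s v * b).degree < ↑(#s + n) := by
  refine (degree_add_le _ _).trans_lt (max_lt ?_ (degree_mul_lt_of_le_of_lt_s9 degree_nodal.le hb))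
  have hnodal : (nodal (s.erase i) v).degree < #s :=
    degree_nodal.trans_lt (Nat.cast_lt.mpr (card_erase_lt_of_mem hi))
  exact (degree_mul_lt_of_le_of_lt_s9 (m := 0) degree_C_le hnodal).trans_le
    (Nat.cast_le.mpr (by omega))

variable [Fintype ι]

/-- `nodal (univ.erase i) γ` and `nodal univ γ` are the paper's `h_ℓ` and `h`. -/
noncomputable def csaAnswer (γ f g : ι → R) (a b : ι → R[X]) : R[X] :=
  ∑ i, (C (f i) + (X - C (γ i)) * a i) * (C (g i) * nodal (univ.erase i) γ + nodal univ γ * b i)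

theorem degree_csaAnswer_lt [Nontrivial R] (γ f g : ι → R) {a b : ι → R[X]} {m n : ℕ}
    (ha : ∀ i, (a i).degree < m) (hb : ∀ i, (b i).degree < n) :
    (csaAnswer γ f g a b).degree < ↑(Fintype.card ι + m + n) := by
  refine (degree_sum_le _ _).trans_lt ((Finset.sup_lt_iff (WithBot.bot_lt_coe _)).mpr fun i _ => ?_)
  have := degree_mul_lt_of_le_of_lt_s9 (degree_C_add_X_sub_C_mul_le (f i) (γ i) (ha i))
    (degree_C_mul_nodal_erase_add_nodal_mul_lt (mem_univ i) γ (g i) (hb i))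
  rwa [card_univ, add_left_comm, ← add_assoc] at this

theorem eval_csaAnswer_node (γ f g : ι → R) (a b : ι → R[X]) (i : ι) :
    (csaAnswer γ f g a b).eval (γ i) = f i * g i * (nodal (univ.erase i) γ).eval (γ i) := by
  have hnodal : (nodal univ γ).eval (γ i) = 0 := eval_nodal_at_node (mem_univ i)
  rw [csaAnswer, eval_finsetSum, sum_eq_single i]
  · simp [hnodal, mul_assoc]
  · intro j _ hji
    have : (nodal (univ.erase j) γ).eval (γ i) = 0 :=
      eval_nodal_at_node (mem_erase.mpr ⟨hji.symm, mem_univ i⟩)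
    simp [hnodal, this]
  · simp

theorem mul_eq_mul_of_csaAnswer_eq [IsDomain R] {γ : ι → R} (hγ : Function.Injective γ)
    {f g f' g' : ι → R} {a b a' b' : ι → R[X]}
    (h : csaAnswer γ f g a b = csaAnswer γ f' g' a' b') (i : ι) : f i * g i = f' i * g' i := by
  have hi := congr_arg (eval (γ i)) h
  rw [eval_csaAnswer_node, eval_csaAnswer_node] at hi
  exact mul_right_cancel₀ (eval_nodal_not_at_node fun j hj => hγ.ne (ne_of_mem_erase hj).symm) hi

end Answer

theorem csa_projective_line_decoding_general {F : Type*} [Field F] {X T L N : ℕ}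
    (hN : N = L + X + T)
    (γ : Fin L → F) (hγ : Function.Injective γ)
    (α : Fin N → F) (hα : Function.Injective α)
    (f g f' g' : Fin L → F) (a a' b b' : Fin L → F[X])
    (ha : ∀ ℓ, (a ℓ).degree < (X : ℕ)) (ha' : ∀ ℓ, (a' ℓ).degree < (X : ℕ))
    (hb : ∀ ℓ, (b ℓ).degree < (T : ℕ)) (hb' : ∀ ℓ, (b' ℓ).degree < (T : ℕ))
    (heq : ∀ n : Fin N,
      ∑ ℓ, ((C (f ℓ) + (Polynomial.X - C (γ ℓ)) * a ℓ)
          * (C (g ℓ) * (∏ ℓ' ∈ Finset.univ.erase ℓ, (Polynomial.X - C (γ ℓ')))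
              + (∏ ℓ', (Polynomial.X - C (γ ℓ'))) * b ℓ)).eval (α n)
      = ∑ ℓ, ((C (f' ℓ) + (Polynomial.X - C (γ ℓ)) * a' ℓ)
          * (C (g' ℓ) * (∏ ℓ' ∈ Finset.univ.erase ℓ, (Polynomial.X - C (γ ℓ')))
              + (∏ ℓ', (Polynomial.X - C (γ ℓ'))) * b' ℓ)).eval (α n)) :
    ∀ ℓ, f ℓ * g ℓ = f' ℓ * g' ℓ := by
  have hcard : (#(univ : Finset (Fin N)) : WithBot ℕ) = ↑(Fintype.card (Fin L) + X + T) := by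
    simp [hN]
  have hanswer : csaAnswer γ f g a b = csaAnswer γ f' g' a' b' :=
    eq_of_degrees_lt_of_eval_index_eq univ hα.injOn
      (hcard ▸ degree_csaAnswer_lt γ f g ha hb) (hcard ▸ degree_csaAnswer_lt γ f' g' ha' hb')
      fun n _ => by simpa only [csaAnswer, nodal, eval_finsetSum] using heq n
  exact mul_eq_mul_of_csaAnswer_eq hγ hanswer

/-- Decoding correctness of the CSA scheme over the projective line: with `N = L + X + T`
distinct evaluation points, if the responses (evaluations of the sum of products of shares)
of two instances agree at all `N` points, then the products `f_ℓ g_ℓ` agree. -/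
theorem csa_projective_line_decoding {F : Type*} [Field F] {X T L N : ℕ}
    (hX : 1 ≤ X) (hT : 1 ≤ T) (hL : 1 ≤ L) (hN : N = L + X + T)
    (γ : Fin L → F) (hγ : Function.Injective γ)
    (α : Fin N → F) (hα : Function.Injective α)
    (f g f' g' : Fin L → F) (a a' b b' : Fin L → F[X])
    (ha : ∀ ℓ, (a ℓ).degree < (X : ℕ)) (ha' : ∀ ℓ, (a' ℓ).degree < (X : ℕ))
    (hb : ∀ ℓ, (b ℓ).degree < (T : ℕ)) (hb' : ∀ ℓ, (b' ℓ).degree < (T : ℕ))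
    (heq : ∀ n : Fin N,
      ∑ ℓ, ((C (f ℓ) + (Polynomial.X - C (γ ℓ)) * a ℓ)
          * (C (g ℓ) * (∏ ℓ' ∈ Finset.univ.erase ℓ, (Polynomial.X - C (γ ℓ')))
              + (∏ ℓ', (Polynomial.X - C (γ ℓ'))) * b ℓ)).eval (α n)
      = ∑ ℓ, ((C (f' ℓ) + (Polynomial.X - C (γ ℓ)) * a' ℓ)
          * (C (g' ℓ) * (∏ ℓ' ∈ Finset.univ.erase ℓ, (Polynomial.X - C (γ ℓ')))
              + (∏ ℓ', (Polynomial.X - C (γ ℓ'))) * b' ℓ)).eval (α n)) :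
    ∀ ℓ, f ℓ * g ℓ = f' ℓ * g' ℓ :=
  csa_projective_line_decoding_general hN γ hγ α hα f g f' g' a a' b b' ha ha' hb hb' heq
end

section
/- (Star product identity for generalized Reed–Solomon codes.) Let F be a field, let α_1, …, α_n ∈ F be pairwise distinct, let k, ℓ ≥ 1, and let f, g ∈ F[x] satisfy f(α_i) ≠ 0 and g(α_i) ≠ 0 for all i. Let ev : F[x] → F^n denote the evaluation map ev(p) = (p(α_1), …, p(α_n)). Then the F-linear span of the set of coordinatewise products {ev(f·p) ⋆ ev(g·q) : deg p < k, deg q < ℓ} equals ev({f·g·r : deg r < min(k + ℓ − 1, n)}). In code language: GRS_k(α, ν) ⋆ GRS_ℓ(α, μ) = GRS_{min(k+ℓ−1, n)}(α, ν⋆μ), where ν_i = f(α_i) and μ_i = g(α_i). -/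
open Polynomial

/-! The coordinatewise product of `ev (f * p)` and `ev (g * q)` is `ev (f * g * (p * q))`, and the
products `p * q` with `deg p < k`, `deg q < ℓ` span exactly the polynomials of degree `< k + ℓ - 1`,
since each monomial of such degree splits as `X ^ a * X ^ b` with `a < k`, `b < ℓ`. Reducing modulo
the nodal polynomial `∏ i, (X - C (α i))`, which vanishes at every `α i`, brings the degree below
`n` without changing the evaluations. -/

namespace Polynomial

theorem X_pow_mem_degreeLT {R : Type*} [Semiring R] {m n : ℕ} (h : m < n) :
    (X ^ m : R[X]) ∈ degreeLT R n :=
  mem_degreeLT.2 <| (degree_X_pow_le m).trans_lt (WithBot.coe_lt_coe.2 h)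

theorem degreeLT_mul_degreeLT {R : Type*} [CommSemiring R] {k l : ℕ} (hk : 1 ≤ k) (hl : 1 ≤ l) :
    degreeLT R k * degreeLT R l = degreeLT R (k + l - 1) := by
  apply le_antisymm
  · refine Submodule.mul_le.2 fun p hp q hq => ?_
    rw [mem_degreeLT] at hp hq ⊢
    rcases eq_or_ne p 0 with rfl | hp0
    · simp
    rcases eq_or_ne q 0 with rfl | hq0
    · simp
    rw [← natDegree_lt_iff_degree_lt hp0] at hp
    rw [← natDegree_lt_iff_degree_lt hq0] at hq
    refine (degree_le_of_natDegree_le natDegree_mul_le).trans_lt ?_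
    exact_mod_cast (by omega : p.natDegree + q.natDegree < k + l - 1)
  · classical
    rw [degreeLT_eq_span_X_pow, Submodule.span_le]
    intro _ hx
    obtain ⟨m, hm, rfl⟩ := Finset.mem_image.1 hx
    rw [Finset.mem_range] at hm
    rw [← Nat.add_sub_of_le (min_le_left m (k - 1)), pow_add]
    exact Submodule.mul_mem_mul (X_pow_mem_degreeLT (by omega)) (X_pow_mem_degreeLT (by omega))

theorem exists_degree_lt_min_card_eval_eq {R ι : Type*} [CommRing R] [Nontrivial R]
    (s : Finset ι) (v : ι → R) {p : R[X]} {d : ℕ} (hp : p.degree < d) :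
    ∃ r : R[X], r.degree < ↑(min d s.card) ∧ ∀ i ∈ s, r.eval (v i) = p.eval (v i) := by
  refine ⟨p %ₘ Lagrange.nodal s v, ?_, fun i hi => ?_⟩
  · rw [Nat.cast_withBot, WithBot.coe_min, lt_min_iff]
    exact ⟨degree_modByMonic_le_left.trans_lt hp,
      (degree_modByMonic_lt p Lagrange.nodal_monic).trans_eq Lagrange.degree_nodal⟩
  · exact eval₂_modByMonic_eq_self_of_root (Lagrange.eval_nodal_at_node hi)

end Polynomial

theorem grs_star_product_general {F : Type*} [Field F] {n k l : ℕ} (hk : 1 ≤ k) (hl : 1 ≤ l)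
    (α : Fin n → F)
    (f g : F[X]) :
    Submodule.span F
      {v : Fin n → F | ∃ p q : F[X], p.degree < (k : ℕ) ∧ q.degree < (l : ℕ) ∧
        v = fun i => (f * p).eval (α i) * (g * q).eval (α i)}
      = Submodule.span F
      {v : Fin n → F | ∃ r : F[X], r.degree < ((min (k + l - 1) n : ℕ) : WithBot ℕ) ∧
        v = fun i => (f * g * r).eval (α i)} := by
  have hstar (p q : F[X]) (i : Fin n) :
      (f * p).eval (α i) * (g * q).eval (α i) = (f * g * (p * q)).eval (α i) := by
    simp only [eval_mul]; ring
  refine le_antisymm (Submodule.span_le.2 ?_) (Submodule.span_le.2 ?_)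
  · rintro _ ⟨p, q, hp, hq, rfl⟩
    have hpq : (p * q).degree < ↑(k + l - 1) := mem_degreeLT.1 <| by
      rw [← degreeLT_mul_degreeLT hk hl]
      exact Submodule.mul_mem_mul (mem_degreeLT.2 hp) (mem_degreeLT.2 hq)
    obtain ⟨r, hr, hr_eval⟩ := exists_degree_lt_min_card_eval_eq Finset.univ α hpq
    refine Submodule.subset_span ⟨r, by simpa using hr, funext fun i => ?_⟩
    rw [hstar, eval_mul, eval_mul (p := f * g), hr_eval i (Finset.mem_univ i)]
  · rintro _ ⟨r, hr, rfl⟩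
    let E : F[X] →ₗ[F] Fin n → F :=
      LinearMap.pi fun i => (leval (α i)).comp (LinearMap.mulLeft F (f * g))
    have hr_mem : r ∈ degreeLT F k * degreeLT F l := by
      rw [degreeLT_mul_degreeLT hk hl, mem_degreeLT]
      exact hr.trans_le (WithBot.coe_le_coe.2 (min_le_left _ _))
    change E r ∈ _
    refine Submodule.mem_comap.1 (Submodule.mul_le.2 (fun p hp q hq => ?_) hr_mem)
    exact Submodule.subset_span
      ⟨p, q, mem_degreeLT.1 hp, mem_degreeLT.1 hq, funext fun i => (hstar p q i).symm⟩

/-- Star product identity for generalized Reed–Solomon codes: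
the span of coordinatewise products of evaluation vectors of `f·p` (`deg p < k`) and
`g·q` (`deg q < ℓ`) at `n` distinct points (where `f, g` do not vanish) equals the span of
evaluation vectors of `f·g·r` with `deg r < min (k + ℓ - 1) n`; that is,
`GRS_k(α, ν) ⋆ GRS_ℓ(α, μ) = GRS_{min(k+ℓ−1,n)}(α, ν⋆μ)`. -/
theorem grs_star_product {F : Type*} [Field F] {n k l : ℕ} (hk : 1 ≤ k) (hl : 1 ≤ l)
    (α : Fin n → F) (hα : Function.Injective α)
    (f g : F[X]) (hf : ∀ i, f.eval (α i) ≠ 0) (hg : ∀ i, g.eval (α i) ≠ 0) :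
    Submodule.span F
      {v : Fin n → F | ∃ p q : F[X], p.degree < (k : ℕ) ∧ q.degree < (l : ℕ) ∧
        v = fun i => (f * p).eval (α i) * (g * q).eval (α i)}
      = Submodule.span F
      {v : Fin n → F | ∃ r : F[X], r.degree < ((min (k + l - 1) n : ℕ) : WithBot ℕ) ∧
        v = fun i => (f * g * r).eval (α i)} :=
  grs_star_product_general hk hl α f g
end

section
/- (Decoding correctness in Theorem 2: PIR from homomorphic secret sharing.) Let F be a field, N, L, M ≥ 1. For each ℓ ∈ {1,…,L}, let c_ℓ, d_ℓ ∈ F^N be vectors and let C_ℓ^noise, D_ℓ^noise ⊆ F^N be linear subspaces. Set e_ℓ = c_ℓ ⋆ d_ℓ and let E^noise ⊆ F^N be the sum over ℓ of the spans of {c_ℓ ⋆ w : w ∈ D_ℓ^noise}, {v ⋆ d_ℓ : v ∈ C_ℓ^noise}, and {v ⋆ w : v ∈ C_ℓ^noise, w ∈ D_ℓ^noise}. Assume the vectors e_1, …, e_L are linearly independent and span{e_1,…,e_L} ∩ E^noise = 0. Let μ, μ' ∈ {1,…,M}, let s, s' : {1,…,M}×{1,…,L} → F be files, and suppose the shares satisfy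 ŝ_{m,ℓ} − s_{m,ℓ}·c_ℓ ∈ C_ℓ^noise, ŝ'_{m,ℓ} − s'_{m,ℓ}·c_ℓ ∈ C_ℓ^noise, and the query shares satisfy q̂_{m,ℓ} − δ_{m,μ}·d_ℓ ∈ D_ℓ^noise and q̂'_{m,ℓ} − δ_{m,μ'}·d_ℓ ∈ D_ℓ^noise, where δ is the Kronecker delta. If the responses agree, i.e. ∑_{ℓ=1}^{L} ∑_{m=1}^{M} ŝ_{m,ℓ} ⋆ q̂_{m,ℓ} = ∑_{ℓ=1}^{L} ∑_{m=1}^{M} ŝ'_{m,ℓ} ⋆ q̂'_{m,ℓ}, then s_{μ,ℓ} = s'_{μ',ℓ} for every ℓ ∈ {1,…,L}. In particular, the desired file (s_{μ,1},…,s_{μ,L}) is uniquely determined by the response vector. -/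
/-!
Modulo the noise space, each share is a multiple of `c_ℓ` and each query share a multiple of
`d_ℓ`, and a product of a signal plus noise with a signal plus noise is the product of the
signals plus an element of the product noise space. Hence the response is congruent to
`∑ ℓ s_{μ,ℓ} e_ℓ` modulo `E^noise`. Since the `e_ℓ` stay linearly independent in the quotient by
`E^noise`, equal responses force equal coefficients.
-/

open Submodule

section Decoding

variable {ι R M : Type*} [Fintype ι] [Ring R] [AddCommGroup M] [Module R M]

theorem LinearIndependent.eq_coords_of_sub_mem {e : ι → M} (he : LinearIndependent R e)
    {E : Submodule R M} (hE : Disjoint (span R (Set.range e)) E) {x : M} {a b : ι → R}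
    (ha : x - ∑ i, a i • e i ∈ E) (hb : x - ∑ i, b i • e i ∈ E) (i : ι) : a i = b i := by
  have hquot : LinearIndependent R (E.mkQ ∘ e) := he.map (by rwa [ker_mkQ])
  have hcongr : E.mkQ (∑ i, a i • e i) = E.mkQ (∑ i, b i • e i) := by
    rw [mkQ_apply, mkQ_apply, Submodule.Quotient.eq, ← sub_sub_sub_cancel_left _ _ x]
    exact E.sub_mem hb ha
  simp only [map_sum, map_smul] at hcongr
  exact hquot.eq_coords_of_eq hcongr i

end Decoding

section ProductNoise

variable {K A : Type*} [CommRing K] [Ring A] [Algebra K A]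

def productNoise (c d : A) (C D : Submodule K A) : Submodule K A :=
  span K {v | ∃ w ∈ D, v = c * w} ⊔ span K {v | ∃ w ∈ C, v = w * d}
    ⊔ span K {v | ∃ u ∈ C, ∃ w ∈ D, v = u * w}

theorem mul_sub_smul_mul_mem_productNoise {c d : A} {C D : Submodule K A} {x y : A} {a b : K}
    (hx : x - a • c ∈ C) (hy : y - b • d ∈ D) :
    x * y - (a * b) • (c * d) ∈ productNoise c d C D := by
  have hsplit : x * y - (a * b) • (c * d) =
      a • (c * (y - b • d)) + b • ((x - a • c) * d) + (x - a • c) * (y - b • d) := by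
    simp only [mul_sub, sub_mul, smul_mul_assoc, mul_smul_comm, smul_sub, smul_smul, mul_comm b]
    abel
  rw [hsplit]
  refine add_mem (add_mem ?_ ?_) ?_
  · exact mem_sup_left (mem_sup_left (smul_mem _ a (subset_span ⟨_, hy, rfl⟩)))
  · exact mem_sup_left (mem_sup_right (smul_mem _ b (subset_span ⟨_, hx, rfl⟩)))
  · exact mem_sup_right (subset_span ⟨_, hx, _, hy, rfl⟩)

theorem sum_mul_sub_smul_mul_mem_productNoise {μ : Type*} [Fintype μ] {c d : A}
    {C D : Submodule K A} {x y : μ → A} {a b : μ → K}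
    (hx : ∀ m, x m - a m • c ∈ C) (hy : ∀ m, y m - b m • d ∈ D) :
    ∑ m, x m * y m - (∑ m, a m * b m) • (c * d) ∈ productNoise c d C D := by
  rw [Finset.sum_smul, ← Finset.sum_sub_distrib]
  exact sum_mem fun m _ ↦ mul_sub_smul_mul_mem_productNoise (hx m) (hy m)

end ProductNoise

theorem pir_decoding_correctness_general {F : Type*} [Field F] {N L M : ℕ}
    (c d : Fin L → (Fin N → F))
    (Cnoise Dnoise : Fin L → Submodule F (Fin N → F))
    (e : Fin L → (Fin N → F)) (he : ∀ ℓ, e ℓ = c ℓ * d ℓ)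
    (Enoise : Submodule F (Fin N → F))
    (hE : Enoise = ⨆ ℓ,
      (Submodule.span F {v : Fin N → F | ∃ w ∈ Dnoise ℓ, v = c ℓ * w}
        ⊔ Submodule.span F {v : Fin N → F | ∃ w ∈ Cnoise ℓ, v = w * d ℓ}
        ⊔ Submodule.span F {v : Fin N → F | ∃ u ∈ Cnoise ℓ, ∃ w ∈ Dnoise ℓ, v = u * w}))
    (hind : LinearIndependent F e)
    (hdisj : Submodule.span F (Set.range e) ⊓ Enoise = ⊥)
    (μ μ' : Fin M) (s s' : Fin M → Fin L → F)
    (shat shat' qhat qhat' : Fin M → Fin L → (Fin N → F))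
    (hs : ∀ m ℓ, shat m ℓ - s m ℓ • c ℓ ∈ Cnoise ℓ)
    (hs' : ∀ m ℓ, shat' m ℓ - s' m ℓ • c ℓ ∈ Cnoise ℓ)
    (hq : ∀ m ℓ, qhat m ℓ - (if m = μ then (1 : F) else 0) • d ℓ ∈ Dnoise ℓ)
    (hq' : ∀ m ℓ, qhat' m ℓ - (if m = μ' then (1 : F) else 0) • d ℓ ∈ Dnoise ℓ)
    (hresp : ∑ ℓ, ∑ m, shat m ℓ * qhat m ℓ = ∑ ℓ, ∑ m, shat' m ℓ * qhat' m ℓ) :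
    ∀ ℓ, s μ ℓ = s' μ' ℓ := by
  have hE' : Enoise = ⨆ ℓ, productNoise (c ℓ) (d ℓ) (Cnoise ℓ) (Dnoise ℓ) := hE
  have response_sub_mem : ∀ (sh q : Fin M → Fin L → Fin N → F) (t : Fin M → Fin L → F) (ν : Fin M),
      (∀ m ℓ, sh m ℓ - t m ℓ • c ℓ ∈ Cnoise ℓ) →
      (∀ m ℓ, q m ℓ - (if m = ν then (1 : F) else 0) • d ℓ ∈ Dnoise ℓ) →
      ∑ ℓ, ∑ m, sh m ℓ * q m ℓ - ∑ ℓ, t ν ℓ • e ℓ ∈ Enoise := by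
    intro sh q t ν hsh hq
    rw [hE', ← Finset.sum_sub_distrib]
    refine sum_mem fun ℓ _ ↦ mem_iSup_of_mem ℓ ?_
    simpa [he] using sum_mul_sub_smul_mul_mem_productNoise (hsh · ℓ) (hq · ℓ)
  refine hind.eq_coords_of_sub_mem (disjoint_iff.mpr hdisj)
    (response_sub_mem shat qhat s μ hs hq) ?_
  rw [hresp]
  exact response_sub_mem shat' qhat' s' μ' hs' hq'

/-- Decoding correctness of PIR from homomorphic secret sharing (Theorem 2): if the
information vectors `e_ℓ = c_ℓ ⋆ d_ℓ` are linearly independent and their span meets the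
noise space trivially, then equal responses imply equal desired file fragments.
Here the star product on `Fin N → F` is the pointwise product. -/
theorem pir_decoding_correctness {F : Type*} [Field F] {N L M : ℕ}
    (hN : 1 ≤ N) (hL : 1 ≤ L) (hM : 1 ≤ M)
    (c d : Fin L → (Fin N → F))
    (Cnoise Dnoise : Fin L → Submodule F (Fin N → F))
    (e : Fin L → (Fin N → F)) (he : ∀ ℓ, e ℓ = c ℓ * d ℓ)
    (Enoise : Submodule F (Fin N → F))
    (hE : Enoise = ⨆ ℓ,
      (Submodule.span F {v : Fin N → F | ∃ w ∈ Dnoise ℓ, v = c ℓ * w}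
        ⊔ Submodule.span F {v : Fin N → F | ∃ w ∈ Cnoise ℓ, v = w * d ℓ}
        ⊔ Submodule.span F {v : Fin N → F | ∃ u ∈ Cnoise ℓ, ∃ w ∈ Dnoise ℓ, v = u * w}))
    (hind : LinearIndependent F e)
    (hdisj : Submodule.span F (Set.range e) ⊓ Enoise = ⊥)
    (μ μ' : Fin M) (s s' : Fin M → Fin L → F)
    (shat shat' qhat qhat' : Fin M → Fin L → (Fin N → F))
    (hs : ∀ m ℓ, shat m ℓ - s m ℓ • c ℓ ∈ Cnoise ℓ)
    (hs' : ∀ m ℓ, shat' m ℓ - s' m ℓ • c ℓ ∈ Cnoise ℓ)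
    (hq : ∀ m ℓ, qhat m ℓ - (if m = μ then (1 : F) else 0) • d ℓ ∈ Dnoise ℓ)
    (hq' : ∀ m ℓ, qhat' m ℓ - (if m = μ' then (1 : F) else 0) • d ℓ ∈ Dnoise ℓ)
    (hresp : ∑ ℓ, ∑ m, shat m ℓ * qhat m ℓ = ∑ ℓ, ∑ m, shat' m ℓ * qhat' m ℓ) :
    ∀ ℓ, s μ ℓ = s' μ' ℓ :=
  pir_decoding_correctness_general c d Cnoise Dnoise e he Enoise hE hind hdisj μ μ' s s' shat shat'
    qhat qhat' hs hs' hq hq' hresp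
end
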